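/- Let δ: G → W be a strict W-groupoid on a connected simply connected groupoid G (a groupoid with exactly one edge between each ordered pair of vertices). Define δ': G₀ × G₀ → W by δ'(C,D) = δ(g) where g is the unique edge from C to D. Then (G₀, δ') is a building of type W, i.e., satisfies (WD1), (WD2), (WD3). -/

import Mathlib

open List

variable {B : Type*} {W : Type*} [Group W] {M : CoxeterMatrix B}

/-- The Bruhat order on a Coxeter group, defined via the subword property. -/
def BruhatLE (cs : CoxeterSystem M W) (v w : W) : Prop :=
  ∃ ω : List B, cs.IsReduced ω ∧ cs.wordProd ω = w ∧
    ∃ ω' : List B, ω'.Sublist ω ∧ cs.wordProd ω' = v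

variable {Δ : Type*}

/-- (WD1): `δ(C,D) = 1` iff `C = D`. -/
def WD1 (d : Δ → Δ → W) : Prop := ∀ C D : Δ, d C D = 1 ↔ C = D

/-- (WD2): if `δ(C,D) = w` and `δ(D,D') = s ∈ S`, then `δ(C,D') ∈ {ws, w}` if
`ws < w`, and `δ(C,D') = ws` if `ws > w`. -/
def WD2 (cs : CoxeterSystem M W) (d : Δ → Δ → W) : Prop :=
  ∀ (C D D' : Δ) (i : B), d D D' = cs.simple i →
    (cs.IsRightDescent (d C D) i → d C D' = d C D * cs.simple i ∨ d C D' = d C D) ∧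
    (¬ cs.IsRightDescent (d C D) i → d C D' = d C D * cs.simple i)

/-- (WD3): for all `C, D` and `s ∈ S` there is `D'` with `δ(D,D') = s` and
`δ(C,D') = δ(C,D)s`. -/
def WD3 (cs : CoxeterSystem M W) (d : Δ → Δ → W) : Prop :=
  ∀ (C D : Δ) (i : B), ∃ D' : Δ, d D D' = cs.simple i ∧ d C D' = d C D * cs.simple i

/-!
A strict `W`-groupoid on a simply connected groupoid satisfies `δ(D,C) = δ(C,D)⁻¹`, because
`δ(C,D) δ(D,C) ≤ δ(C,C) = 1`. With `w = δ(C,D)`, `u = δ(C,D')` and `δ(D,D') = s`, (WG2) applied to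
the triangles `C D D'` and `C D' D` gives `ws ≤ u` and `us ≤ w`; since the Bruhat order is compatible
with length and `ℓ(ws) = ℓ(w) ± 1`, length counting settles (WD2) unless `s` is a right descent of
`u`. In that case (WG3) provides `E` with `δ(E,D') = s` and `δ(C,E) = us`, and `δ(E,D) s ≤ s`
forces `δ(E,D) ∈ {1, s}`: either `E = D` by strictness, or `u ≤ w`, and `u` is squeezed between
`ws` and `w`. (WD3) follows from (WG3) at a descent and from weakness and (WD2) otherwise.
-/

namespace BruhatLE

variable {cs : CoxeterSystem M W} {v w : W}

lemma length_le (h : BruhatLE cs v w) : cs.length v ≤ cs.length w := by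
  obtain ⟨ω, hred, rfl, ω', hsub, rfl⟩ := h
  calc cs.length (cs.wordProd ω') ≤ ω'.length := cs.length_wordProd_le ω'
    _ ≤ ω.length := hsub.length_le
    _ = cs.length (cs.wordProd ω) := hred.symm

lemma eq_of_length_le (h : BruhatLE cs v w) (hl : cs.length w ≤ cs.length v) : v = w := by
  obtain ⟨ω, hred, rfl, ω', hsub, rfl⟩ := h
  have hω' : cs.length (cs.wordProd ω') ≤ ω'.length := cs.length_wordProd_le ω'
  have hω : cs.length (cs.wordProd ω) = ω.length := hred
  rw [hsub.eq_of_length (le_antisymm hsub.length_le (by omega))]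

lemma eq_one (h : BruhatLE cs v 1) : v = 1 :=
  cs.length_eq_zero_iff.mp (Nat.le_zero.mp (cs.length_one ▸ h.length_le))

lemma eq_one_or_eq_simple {i : B} (h : BruhatLE cs v (cs.simple i)) :
    v = 1 ∨ v = cs.simple i := by
  have hl := h.length_le
  rw [cs.length_simple] at hl
  rcases Nat.le_one_iff_eq_zero_or_eq_one.mp hl with h0 | h1
  · exact Or.inl (cs.length_eq_zero_iff.mp h0)
  · exact Or.inr (h.eq_of_length_le (by rw [cs.length_simple, h1]))

lemma eq_mul_simple_or_eq {u : W} {i : B} (hw : BruhatLE cs (w * cs.simple i) u)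
    (hu : BruhatLE cs u w) : u = w * cs.simple i ∨ u = w := by
  have := hw.length_le
  have := hu.length_le
  rcases cs.length_mul_simple w i with hl | hl
  · exact Or.inl (hw.eq_of_length_le (by omega)).symm
  · rcases Nat.lt_or_ge (cs.length u) (cs.length w) with hlt | hge
    · exact Or.inl (hw.eq_of_length_le (by omega)).symm
    · exact Or.inr (hu.eq_of_length_le hge)

lemma eq_mul_simple_of_not_isRightDescent {u : W} {i : B}
    (hw : BruhatLE cs (w * cs.simple i) u) (hu : BruhatLE cs (u * cs.simple i) w)
    (hnd : ¬ cs.IsRightDescent u i) : u = w * cs.simple i := by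
  have := cs.not_isRightDescent_iff.mp hnd
  have := hw.length_le
  have := hu.length_le
  have := cs.length_mul_simple w i
  exact (hw.eq_of_length_le (by omega)).symm

end BruhatLE

section WGroupoid

variable {cs : CoxeterSystem M W} {d : Δ → Δ → W}

lemma swap_eq_inv_of_bruhatLE (h1 : ∀ C : Δ, d C C = 1)
    (h2 : ∀ C D E : Δ, BruhatLE cs (d C D * d D E) (d C E)) (C D : Δ) :
    d D C = (d C D)⁻¹ :=
  eq_inv_of_mul_eq_one_right (h1 C ▸ h2 C D C).eq_one

lemma eq_mul_simple_or_eq_of_isRightDescent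
    (h2 : ∀ C D E : Δ, BruhatLE cs (d C D * d D E) (d C E))
    (h3 : ∀ (C D : Δ) (i : B), cs.IsRightDescent (d C D) i →
      ∃ E : Δ, d E D = cs.simple i ∧ d C E = d C D * cs.simple i)
    (hstrict : ∀ C D : Δ, d C D = 1 → C = D) {C D D' : Δ} {i : B}
    (hDD' : d D D' = cs.simple i) (hw : BruhatLE cs (d C D * cs.simple i) (d C D'))
    (hud : cs.IsRightDescent (d C D') i) :
    d C D' = d C D * cs.simple i ∨ d C D' = d C D := by
  obtain ⟨E, hED', hCE⟩ := h3 C D' i hud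
  have hle : BruhatLE cs (d E D * cs.simple i) (cs.simple i) := by
    simpa only [hDD', hED'] using h2 E D D'
  rcases hle.eq_one_or_eq_simple with hED | hED
  · replace hED : d E D = cs.simple i := by
      rw [eq_inv_of_mul_eq_one_left hED, cs.inv_simple]
    have hu : BruhatLE cs (d C D') (d C D) := by
      simpa only [hCE, hED, mul_assoc, cs.simple_mul_simple_self, mul_one] using h2 C E D
    exact hw.eq_mul_simple_or_eq hu
  · have hE : E = D := hstrict E D (by simpa using hED)
    subst hE
    left
    rw [hCE, mul_assoc, cs.simple_mul_simple_self, mul_one]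

theorem wd2_of_wGroupoid (h1 : ∀ C : Δ, d C C = 1)
    (h2 : ∀ C D E : Δ, BruhatLE cs (d C D * d D E) (d C E))
    (h3 : ∀ (C D : Δ) (i : B), cs.IsRightDescent (d C D) i →
      ∃ E : Δ, d E D = cs.simple i ∧ d C E = d C D * cs.simple i)
    (hstrict : ∀ C D : Δ, d C D = 1 → C = D) : WD2 cs d := by
  intro C D D' i hDD'
  have hw : BruhatLE cs (d C D * cs.simple i) (d C D') := hDD' ▸ h2 C D D'
  have hu : BruhatLE cs (d C D' * cs.simple i) (d C D) := by
    simpa only [swap_eq_inv_of_bruhatLE h1 h2 D D', hDD', cs.inv_simple] using h2 C D' D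
  refine ⟨fun _ => ?_, fun hwd => ?_⟩
  · by_cases hud : cs.IsRightDescent (d C D') i
    · exact eq_mul_simple_or_eq_of_isRightDescent h2 h3 hstrict hDD' hw hud
    · exact Or.inl (hw.eq_mul_simple_of_not_isRightDescent hu hud)
  · rw [hu.eq_mul_simple_of_not_isRightDescent hw hwd, mul_assoc, cs.simple_mul_simple_self,
      mul_one]

end WGroupoid

/-- Let `δ` be a strict `W`-groupoid on a connected simply connected groupoid with
vertex set `Δ`; identifying the unique edge from `C` to `D` with the pair `(C,D)`,
`δ` is a function `d : Δ × Δ → W` which is weak and satisfies (WG1), (WG2), (WG3)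
and strictness in pair form. Then `(Δ, d)` is a building of type `W`. -/
theorem stmt11 (cs : CoxeterSystem M W) (d : Δ → Δ → W)
    (hweak : ∀ (C : Δ) (i : B), ∃ D : Δ, d C D = cs.simple i)
    (h1 : ∀ C : Δ, d C C = 1)
    (h2 : ∀ C D E : Δ, BruhatLE cs (d C D * d D E) (d C E))
    (h3 : ∀ (C D : Δ) (i : B), cs.IsRightDescent (d C D) i →
      ∃ E : Δ, d E D = cs.simple i ∧ d C E = d C D * cs.simple i)
    (hstrict : ∀ C D : Δ, d C D = 1 → C = D) :
    WD1 d ∧ WD2 cs d ∧ WD3 cs d := by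
  have hWD2 := wd2_of_wGroupoid h1 h2 h3 hstrict
  refine ⟨fun C D => ⟨hstrict C D, fun h => h ▸ h1 C⟩, hWD2, fun C D i => ?_⟩
  by_cases hd : cs.IsRightDescent (d C D) i
  · obtain ⟨E, hED, hCE⟩ := h3 C D i hd
    exact ⟨E, by rw [swap_eq_inv_of_bruhatLE h1 h2 E D, hED, cs.inv_simple], hCE⟩
  · obtain ⟨D', hDD'⟩ := hweak D i
    exact ⟨D', hDD', (hWD2 C D D' i hDD').2 hd⟩
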